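/- For all n ≥ 0 and positive integers r₁, r₂, the convolution identity (r₁+r₂-1)(1+y)·Σ_{k=0}^{n} C(n,k) w_k^{(r₁)}(y) w_{n-k}^{(r₂)}(y) = w_{n+1}^{(r₁+r₂-1)}(y) + (r₁+r₂-1)·w_n^{(r₁+r₂-1)}(y) holds as an identity of polynomials in y. -/
import Mathlib


open Finset

/-- Stirling numbers of the second kind. -/
def stirling2 : ℕ → ℕ → ℕ
  | 0, 0 => 1
  | 0, _+1 => 0
  | _+1, 0 => 0
  | n+1, k+1 => stirling2 n k + (k+1) * stirling2 n (k+1)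

/-- Unsigned Stirling numbers of the first kind. -/
def stirling1 : ℕ → ℕ → ℕ
  | 0, 0 => 1
  | 0, _+1 => 0
  | _+1, 0 => 0
  | n+1, k+1 => stirling1 n k + n * stirling1 n (k+1)

/-- `rstirling2 r n k` is the r-Stirling number of the second kind S_r(n+r, k+r). -/
def rstirling2 (r : ℕ) : ℕ → ℕ → ℕ
  | 0, 0 => 1
  | 0, _+1 => 0
  | n+1, 0 => r * rstirling2 r n 0
  | n+1, k+1 => rstirling2 r n k + (k+1+r) * rstirling2 r n (k+1)

/-- `rstirling1 r n k` is the unsigned r-Stirling number of the first kind c_r(n+r, k+r). -/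
def rstirling1 (r : ℕ) : ℕ → ℕ → ℕ
  | 0, 0 => 1
  | 0, _+1 => 0
  | n+1, 0 => (n+r) * rstirling1 r n 0
  | n+1, k+1 => rstirling1 r n k + (n+r) * rstirling1 r n (k+1)

/-- Rising factorial (Pochhammer symbol) (r)_k = r(r+1)⋯(r+k-1). -/
def risingFactorial (r k : ℕ) : ℕ := ∏ i ∈ Finset.range k, (r + i)

/-- Higher order geometric polynomial w_n^{(r)}(y) = Σ_{k=0}^n S(n,k) (r)_k y^k.
For r = 1 this is the geometric (Fubini) polynomial w_n(y). -/
def geomPoly (r n : ℕ) {R : Type*} [CommRing R] (y : R) : R :=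
  ∑ k ∈ Finset.range (n+1), ((stirling2 n k * risingFactorial r k : ℕ) : R) * y ^ k

lemma rf_succ (r k : ℕ) : risingFactorial r (k+1) = risingFactorial r k * (r + k) :=
  Finset.prod_range_succ _ _

lemma rf_succ' (r k : ℕ) : risingFactorial r (k+1) = r * risingFactorial (r+1) k := by
  unfold risingFactorial
  rw [Finset.prod_range_succ', mul_comm]
  congr 1
  exact Finset.prod_congr rfl fun i _ => by omega

lemma stirling2_eq_zero_of_lt : ∀ {n k : ℕ}, n < k → stirling2 n k = 0 := by
  intro n
  induction n with
  | zero => intro k hk; match k, hk with | k+1, _ => rfl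
  | succ m ih =>
    intro k hk
    match k, hk with
    | k+1, hk =>
      show stirling2 m k + (k+1) * stirling2 m (k+1) = 0
      rw [ih (by omega), ih (by omega)]; ring

lemma lemB (r m : ℕ) (y : ℤ) :
    geomPoly r (m+1) y + (r:ℤ) * geomPoly r m y = (r:ℤ) * (1+y) * geomPoly (r+1) m y := by
  unfold geomPoly
  rw [Finset.sum_range_succ'
    (fun k => ((stirling2 (m+1) k * risingFactorial r k : ℕ) : ℤ) * y ^ k) (m+1)]
  have e1 : ∀ f : ℕ → ℤ, f 0 = 0 → f (m+1) = 0 →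
      ∑ k ∈ Finset.range (m+1), f (k+1) = ∑ k ∈ Finset.range (m+1), f k := by
    intro f hf0 hfm
    rw [← add_zero (∑ k ∈ Finset.range (m+1), f (k+1)), ← hf0, ← Finset.sum_range_succ',
      Finset.sum_range_succ, hfm, add_zero]
  have aux : ∑ k ∈ Finset.range (m+1),
        (((k+1) * (stirling2 m (k+1) * risingFactorial r (k+1)) : ℕ) : ℤ) * y ^ (k+1)
      = ∑ k ∈ Finset.range (m+1),
        ((k * (stirling2 m k * risingFactorial r k) : ℕ) : ℤ) * y ^ k :=
    e1 (fun k => ((k * (stirling2 m k * risingFactorial r k) : ℕ) : ℤ) * y ^ k) (by simp)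
      (by simp [stirling2_eq_zero_of_lt (Nat.lt_succ_self m)])
  have h1 : ∑ k ∈ Finset.range (m+1),
        ((stirling2 (m+1) (k+1) * risingFactorial r (k+1) : ℕ) : ℤ) * y ^ (k+1)
      = (∑ k ∈ Finset.range (m+1),
          ((stirling2 m k * risingFactorial r (k+1) : ℕ) : ℤ) * y ^ (k+1))
        + ∑ k ∈ Finset.range (m+1),
          (((k+1) * (stirling2 m (k+1) * risingFactorial r (k+1)) : ℕ) : ℤ) * y ^ (k+1) := by
    rw [← Finset.sum_add_distrib]
    refine Finset.sum_congr rfl fun k _ => ?_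
    have : stirling2 (m+1) (k+1) = stirling2 m k + (k+1) * stirling2 m (k+1) := rfl
    rw [this]; push_cast; ring
  have h2 : (r:ℤ) * (1+y) * ∑ k ∈ Finset.range (m+1),
        ((stirling2 m k * risingFactorial (r+1) k : ℕ) : ℤ) * y ^ k
      = (∑ k ∈ Finset.range (m+1),
          ((stirling2 m k * risingFactorial r (k+1) : ℕ) : ℤ) * y ^ (k+1))
        + ∑ k ∈ Finset.range (m+1),
          ((stirling2 m k * risingFactorial r (k+1) : ℕ) : ℤ) * y ^ k := by
    rw [Finset.mul_sum, ← Finset.sum_add_distrib]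
    refine Finset.sum_congr rfl fun k _ => ?_
    rw [rf_succ']; push_cast; ring
  have h3 : ∑ k ∈ Finset.range (m+1),
        ((stirling2 m k * risingFactorial r (k+1) : ℕ) : ℤ) * y ^ k
      = ((r:ℤ) * ∑ k ∈ Finset.range (m+1),
          ((stirling2 m k * risingFactorial r k : ℕ) : ℤ) * y ^ k)
        + ∑ k ∈ Finset.range (m+1),
          ((k * (stirling2 m k * risingFactorial r k) : ℕ) : ℤ) * y ^ k := by
    rw [Finset.mul_sum, ← Finset.sum_add_distrib]
    refine Finset.sum_congr rfl fun k _ => ?_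
    rw [rf_succ]; push_cast; ring
  have hc0 : ((stirling2 (m+1) 0 * risingFactorial r 0 : ℕ) : ℤ) * y ^ 0 = 0 := by
    simp [stirling2]
  linarith [h1, h2, h3, aux, hc0]

lemma lemA (y : ℤ) : ∀ (n : ℕ) (a b : ℕ),
    ∑ k ∈ Finset.range (n+1), (n.choose k : ℤ) * geomPoly a k y * geomPoly b (n-k) y
      = geomPoly (a+b) n y := by
  intro n
  induction n with
  | zero =>
    intro a b
    simp [geomPoly, risingFactorial, stirling2]
  | succ n ih =>
    intro a b
    -- Pascal split
    have pascal : ∑ k ∈ Finset.range (n+2),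
          ((n+1).choose k : ℤ) * geomPoly a k y * geomPoly b (n+1-k) y
        = (∑ k ∈ Finset.range (n+2),
            (n.choose k : ℤ) * geomPoly a k y * geomPoly b (n+1-k) y)
          + ∑ k ∈ Finset.range (n+2),
            (if k = 0 then 0 else (n.choose (k-1) : ℤ)) * geomPoly a k y * geomPoly b (n+1-k) y := by
      rw [← Finset.sum_add_distrib]
      refine Finset.sum_congr rfl fun k _ => ?_
      rcases k with _ | k
      · simp
      · simp only [if_neg (Nat.succ_ne_zero k), Nat.succ_sub_one]
        rw [Nat.choose_succ_succ']
        push_cast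
        ring
    have first : ∑ k ∈ Finset.range (n+2),
          (n.choose k : ℤ) * geomPoly a k y * geomPoly b (n+1-k) y
        = ∑ k ∈ Finset.range (n+1),
          (n.choose k : ℤ) * geomPoly a k y * geomPoly b ((n-k)+1) y := by
      rw [Finset.sum_range_succ]
      simp only [Nat.choose_succ_self, Nat.cast_zero, zero_mul, add_zero]
      refine Finset.sum_congr rfl fun k hk => ?_
      rw [Finset.mem_range] at hk
      congr 2
      omega
    have second : ∑ k ∈ Finset.range (n+2),
          (if k = 0 then 0 else (n.choose (k-1) : ℤ)) * geomPoly a k y * geomPoly b (n+1-k) y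
        = ∑ k ∈ Finset.range (n+1),
          (n.choose k : ℤ) * geomPoly a (k+1) y * geomPoly b (n-k) y := by
      rw [Finset.sum_range_succ'
        (fun k => (if k = 0 then 0 else (n.choose (k-1) : ℤ)) * geomPoly a k y * geomPoly b (n+1-k) y) (n+1)]
      simp [Nat.succ_sub_succ]
    have conv1 : ∑ k ∈ Finset.range (n+1),
          (n.choose k : ℤ) * geomPoly a k y * geomPoly b ((n-k)+1) y
        = (b:ℤ) * (1+y) * geomPoly (a+(b+1)) n y - (b:ℤ) * geomPoly (a+b) n y := by
      rw [← ih a (b+1), ← ih a b, Finset.mul_sum, Finset.mul_sum, ← Finset.sum_sub_distrib]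
      refine Finset.sum_congr rfl fun k _ => ?_
      linear_combination ((n.choose k : ℤ) * geomPoly a k y) * lemB b (n-k) y
    have conv2 : ∑ k ∈ Finset.range (n+1),
          (n.choose k : ℤ) * geomPoly a (k+1) y * geomPoly b (n-k) y
        = (a:ℤ) * (1+y) * geomPoly ((a+1)+b) n y - (a:ℤ) * geomPoly (a+b) n y := by
      rw [← ih (a+1) b, ← ih a b, Finset.mul_sum, Finset.mul_sum, ← Finset.sum_sub_distrib]
      refine Finset.sum_congr rfl fun k _ => ?_
      linear_combination ((n.choose k : ℤ) * geomPoly b (n-k) y) * lemB a k y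
    have hB := lemB (a+b) n y
    have e1 : a + (b+1) = (a+b)+1 := by omega
    have e2 : (a+1) + b = (a+b)+1 := by omega
    rw [pascal, first, second, conv1, conv2, e1, e2]
    push_cast at hB ⊢
    linear_combination -hB


theorem stmt_10 (n : ℕ) (r₁ r₂ : ℕ) (h1 : 1 ≤ r₁) (h2 : 1 ≤ r₂) (y : ℤ) :
    ((r₁ + r₂ - 1 : ℕ) : ℤ) * (1 + y) *
      ∑ k ∈ Finset.range (n+1),
        (n.choose k : ℤ) * geomPoly r₁ k y * geomPoly r₂ (n - k) y =
    geomPoly (r₁ + r₂ - 1) (n+1) y +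
      ((r₁ + r₂ - 1 : ℕ) : ℤ) * geomPoly (r₁ + r₂ - 1) n y := by
  have hA := lemA y n r₁ r₂
  have hB := lemB (r₁ + r₂ - 1) n y
  have e : r₁ + r₂ - 1 + 1 = r₁ + r₂ := by omega
  rw [e] at hB
  rw [hA]
  linarith [hB]
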